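/- Let n ≥ 1, λ > 0, let Q be a positive definite n×n complex matrix with Tr(Q²) = Tr(Q⁻²), and let F be an n×n complex matrix with Tr(F*F) = 1. Let e be the orthogonal projection of ℂⁿ ⊗ ℂⁿ onto ℂ·vec(Q) and f the orthogonal projection of ℂⁿ ⊗ ℂⁿ onto ℂ·vec(Fᵗ). If the Jones relation (id_{ℂⁿ} ⊗ f)(e ⊗ id_{ℂⁿ})(id_{ℂⁿ} ⊗ f) = λ·(id_{ℂⁿ} ⊗ f) holds on ℂⁿ ⊗ ℂⁿ ⊗ ℂⁿ, then Tr(Q²) = Tr(Q⁻²) = λ^{−1/2}, and there exists a unitary n×n matrix U such that F = λ^{1/4}·U·Q⁻¹. -/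

import Mathlib

open Matrix
open scoped Kronecker ComplexOrder

noncomputable section

/-- The orthogonal projection of `ℓ²(ι)` onto the line `ℂ·x`, written as a matrix:
for a unit vector `x` it is `x ↦ x p * conj (x q)`; in general one divides by `‖x‖²`. -/
def lineProj {ι : Type*} [Fintype ι] (x : ι → ℂ) : Matrix ι ι ℂ :=
  (∑ p, x p * star (x p))⁻¹ • Matrix.of fun p q => x p * star (x q)

/-- `e ⊗ id` as an operator (matrix) on `ℂⁿ ⊗ ℂⁿ ⊗ ℂⁿ`, identified with
`EuclideanSpace ℂ (Fin n × Fin n × Fin n)` via the standard bases. -/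
def tensorOne (n : ℕ) (e : Matrix (Fin n × Fin n) (Fin n × Fin n) ℂ) :
    Matrix (Fin n × Fin n × Fin n) (Fin n × Fin n × Fin n) ℂ :=
  Matrix.reindex (Equiv.prodAssoc _ _ _) (Equiv.prodAssoc _ _ _)
    (e ⊗ₖ (1 : Matrix (Fin n) (Fin n) ℂ))

/-- `id ⊗ f` as an operator (matrix) on `ℂⁿ ⊗ ℂⁿ ⊗ ℂⁿ`. -/
def oneTensor (n : ℕ) (f : Matrix (Fin n × Fin n) (Fin n × Fin n) ℂ) :
    Matrix (Fin n × Fin n × Fin n) (Fin n × Fin n × Fin n) ℂ :=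
  (1 : Matrix (Fin n) (Fin n) ℂ) ⊗ₖ f

/-! With `x = vec F` and `q = vec Qᵀ`, the Jones relation factors as
`(1 ⊗ |x⟩⟨x|)(|q⟩⟨q| ⊗ 1)(1 ⊗ |x⟩⟨x|) = (Q F* F Q*) ⊗ |x⟩⟨x|`, so it says exactly
`Q F* F Q = λ Tr(Q²) · 1`. Hence `F* F = λ Tr(Q²) Q⁻²`; taking traces and using
`Tr(Q²) = Tr(Q⁻²)` gives `λ Tr(Q²)² = 1`, and then `λ^(-1/4) F Q` is unitary. -/

namespace Matrix

theorem kronecker_right_cancel {α l m n p : Type*} [MulZeroClass α] [IsRightCancelMulZero α]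
    {M N : Matrix l m α} {P : Matrix n p α} (hP : P ≠ 0) (h : M ⊗ₖ P = N ⊗ₖ P) : M = N := by
  obtain ⟨i, j, hij⟩ : ∃ i j, P i j ≠ 0 := by simpa [← Matrix.ext_iff] using hP
  ext a b
  exact mul_right_cancel₀ hij congr($h (a, i) (b, j))

theorem eq_smul_inv_mul_inv_of_mul_mul_eq_smul_one {n α : Type*} [Fintype n] [DecidableEq n]
    [CommRing α] {Q A : Matrix n n α} (hQ : IsUnit Q.det) {c : α} (h : Q * A * Q = c • 1) :
    A = c • (Q⁻¹ * Q⁻¹) := by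
  calc A = Q⁻¹ * (Q * A * Q) * Q⁻¹ := by
        rw [Matrix.mul_assoc, Matrix.mul_nonsing_inv_cancel_right _ _ hQ,
          Matrix.nonsing_inv_mul_cancel_left _ _ hQ]
    _ = c • (Q⁻¹ * Q⁻¹) := by rw [h, Matrix.mul_smul, Matrix.mul_one, Matrix.smul_mul]

section RCLike

variable {𝕜 n : Type*} [RCLike 𝕜] [Fintype n] [DecidableEq n]

theorem PosDef.trace_sq_pos [Nonempty n] {Q : Matrix n n 𝕜} (hQ : Q.PosDef) :
    0 < trace (Q ^ 2) := by
  rw [sq, ← congrArg (· * Q) hQ.1.eq, ← star_vec_dotProduct_vec, dotProduct_star_self_pos_iff,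
    Ne, vec_eq_zero_iff]
  exact hQ.isUnit.ne_zero

theorem smul_mem_unitaryGroup_of_conjTranspose_mul_self {A : Matrix n n 𝕜} {s : ℝ} (hs : s ≠ 0)
    (h : Aᴴ * A = ((s ^ 2 : ℝ) : 𝕜) • 1) : ((s⁻¹ : ℝ) : 𝕜) • A ∈ unitaryGroup n 𝕜 := by
  rw [mem_unitaryGroup_iff', star_eq_conjTranspose, conjTranspose_smul, Matrix.smul_mul,
    Matrix.mul_smul, h, smul_smul, smul_smul, RCLike.star_def, RCLike.conj_ofReal,
    ← RCLike.ofReal_mul, ← RCLike.ofReal_mul,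
    show s⁻¹ * s⁻¹ * s ^ 2 = 1 by field_simp, RCLike.ofReal_one, one_smul]

theorem exists_mem_unitaryGroup_eq_smul_mul_inv {Q F : Matrix n n 𝕜} (hQ : Qᴴ = Q)
    (hdet : IsUnit Q.det) {s : ℝ} (hs : s ≠ 0) (h : Q * Fᴴ * F * Q = ((s ^ 2 : ℝ) : 𝕜) • 1) :
    ∃ U ∈ unitaryGroup n 𝕜, F = (s : 𝕜) • (U * Q⁻¹) := by
  have hFQ : (F * Q)ᴴ * (F * Q) = ((s ^ 2 : ℝ) : 𝕜) • 1 := by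
    rw [conjTranspose_mul, hQ, ← Matrix.mul_assoc, h]
  refine ⟨_, smul_mem_unitaryGroup_of_conjTranspose_mul_self hs hFQ, ?_⟩
  rw [Matrix.smul_mul, Matrix.mul_nonsing_inv_cancel_right _ _ hdet, smul_smul,
    ← RCLike.ofReal_mul, mul_inv_cancel₀ hs, RCLike.ofReal_one, one_smul]

end RCLike

end Matrix

theorem Real.eq_rpow_neg_half_of_mul_sq_eq_one {a t : ℝ} (ha : 0 < a) (ht : 0 < t)
    (h : a * t ^ 2 = 1) : t = a ^ (-(1 : ℝ) / 2) := by
  rw [neg_div, Real.rpow_neg ha.le, ← Real.sqrt_eq_rpow, ← Real.sqrt_inv,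
    ← eq_inv_of_mul_eq_one_right h, Real.sqrt_sq ht.le]

theorem lineProj_vec {m n : Type*} [Fintype m] [Fintype n] (A : Matrix m n ℂ) :
    lineProj (vec A) = (trace (Aᴴ * A))⁻¹ • vecMulVec (vec A) (star (vec A)) := by
  rw [← star_vec_dotProduct_vec, dotProduct_comm]
  rfl

theorem tensorOne_smul (n : ℕ) (s : ℂ) (e : Matrix (Fin n × Fin n) (Fin n × Fin n) ℂ) :
    tensorOne n (s • e) = s • tensorOne n e := by
  rw [tensorOne, smul_kronecker, reindex_apply, submatrix_smul]
  rfl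

theorem oneTensor_mul_tensorOne_mul_oneTensor (n : ℕ) (A B : Matrix (Fin n) (Fin n) ℂ) :
    oneTensor n (vecMulVec (vec A) (star (vec A))) *
        tensorOne n (vecMulVec (vec Bᵀ) (star (vec Bᵀ))) *
        oneTensor n (vecMulVec (vec A) (star (vec A))) =
      (B * Aᴴ * A * Bᴴ) ⊗ₖ vecMulVec (vec A) (star (vec A)) := by
  ext ⟨a, b, c⟩ ⟨a', b', c'⟩
  simp only [oneTensor, tensorOne, reindex_apply, mul_apply, kroneckerMap_apply, one_apply,
    vecMulVec_apply, vec, Pi.star_apply, RCLike.star_def, ite_mul, one_mul, zero_mul,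
    submatrix_apply, Equiv.prodAssoc_symm_apply, transpose_apply, mul_ite, mul_one, mul_zero,
    Fintype.sum_prod_type, Finset.sum_ite_eq', Finset.mem_univ, ↓reduceIte, Finset.sum_ite_irrel,
    Finset.sum_const_zero, Finset.sum_ite_eq, Finset.sum_mul, conjTranspose_apply]
  exact Finset.sum_congr rfl fun _ _ => Finset.sum_congr rfl fun _ _ =>
    Finset.sum_congr rfl fun _ _ => by ring

theorem mul_conjTranspose_mul_mul_eq_smul_one_of_jones (n : ℕ) (c : ℂ)
    (Q F : Matrix (Fin n) (Fin n) ℂ) (hQ : trace (Q * Qᴴ) ≠ 0) (hF : trace (Fᴴ * F) = 1)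
    (hJones : oneTensor n (lineProj (vec F)) * tensorOne n (lineProj (vec Qᵀ)) *
        oneTensor n (lineProj (vec F)) = c • oneTensor n (lineProj (vec F))) :
    Q * Fᴴ * F * Qᴴ = (c * trace (Q * Qᴴ)) • 1 := by
  have hnormQ : trace (Qᵀᴴ * Qᵀ) = trace (Q * Qᴴ) := by
    rw [transpose_conjTranspose, ← conjTranspose_transpose, ← transpose_mul, trace_transpose]
  have hvecF : vec F ≠ 0 := by
    rw [Ne, vec_eq_zero_iff]
    rintro rfl
    simp at hF
  rw [lineProj_vec, lineProj_vec, hF, hnormQ, inv_one, one_smul, tensorOne_smul,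
    Matrix.mul_smul, Matrix.smul_mul, oneTensor_mul_tensorOne_mul_oneTensor,
    inv_smul_eq_iff₀ hQ, smul_smul, oneTensor, ← smul_kronecker] at hJones
  rw [kronecker_right_cancel (vecMulVec_ne_zero hvecF (star_ne_zero.2 hvecF)) hJones, mul_comm]

/-- Let `Q` be positive definite with `Tr(Q²) = Tr(Q⁻²)`, let `F` satisfy `Tr(F*F) = 1`,
and let `e`, `f` be the orthogonal projections of `ℂⁿ ⊗ ℂⁿ` onto `ℂ·vec Q` and `ℂ·vec Fᵗ`.
If the Jones relation `(id ⊗ f)(e ⊗ id)(id ⊗ f) = λ (id ⊗ f)` holds, then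
`Tr(Q²) = Tr(Q⁻²) = λ^(-1/2)` and `F = λ^(1/4)·U·Q⁻¹` for some unitary `U`. -/
theorem stmt13 (n : ℕ) (hn : 0 < n) (lam : ℝ) (hlam : 0 < lam)
    (Q : Matrix (Fin n) (Fin n) ℂ) (hQ : Q.PosDef)
    (hTrQ : Matrix.trace (Q ^ 2) = Matrix.trace (Q⁻¹ ^ 2))
    (F : Matrix (Fin n) (Fin n) ℂ) (hF : Matrix.trace (Fᴴ * F) = 1)
    (hJones :
      oneTensor n (lineProj fun p => Fᵀ p.1 p.2) *
          tensorOne n (lineProj fun p => Q p.1 p.2) *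
          oneTensor n (lineProj fun p => Fᵀ p.1 p.2) =
        (lam : ℂ) • oneTensor n (lineProj fun p => Fᵀ p.1 p.2)) :
    Matrix.trace (Q ^ 2) = ((lam ^ (-(1 : ℝ) / 2) : ℝ) : ℂ) ∧
      Matrix.trace (Q⁻¹ ^ 2) = ((lam ^ (-(1 : ℝ) / 2) : ℝ) : ℂ) ∧
      ∃ U ∈ Matrix.unitaryGroup (Fin n) ℂ,
        F = ((lam ^ ((1 : ℝ) / 4) : ℝ) : ℂ) • ((U : Matrix (Fin n) (Fin n) ℂ) * Q⁻¹) := by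
  have : Nonempty (Fin n) := ⟨⟨0, hn⟩⟩
  have hdet : IsUnit Q.det := (isUnit_iff_isUnit_det Q).1 hQ.isUnit
  have hQQ : trace (Q * Qᴴ) = trace (Q ^ 2) := by rw [hQ.1.eq, sq]
  obtain ⟨t, ht, htT⟩ : ∃ t > (0 : ℝ), (t : ℂ) = trace (Q ^ 2) :=
    RCLike.pos_iff_exists_ofReal.1 hQ.trace_sq_pos
  have hM : Q * Fᴴ * F * Q = ((lam * t : ℝ) : ℂ) • 1 := by
    have h := mul_conjTranspose_mul_mul_eq_smul_one_of_jones n lam Q F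
      (by rw [hQQ, ← htT]; exact Complex.ofReal_ne_zero.2 ht.ne') hF hJones
    rwa [hQQ, ← htT, hQ.1.eq, ← Complex.ofReal_mul] at h
  have hlt : lam * t ^ 2 = 1 := by
    have h := congrArg trace (eq_smul_inv_mul_inv_of_mul_mul_eq_smul_one (A := Fᴴ * F)
      hdet (by rw [← Matrix.mul_assoc]; exact hM))
    rw [hF, trace_smul, ← sq, ← hTrQ, ← htT, smul_eq_mul] at h
    exact_mod_cast (show ((lam * t ^ 2 : ℝ) : ℂ) = 1 by push_cast at h ⊢; linear_combination -h)
  have htval := Real.eq_rpow_neg_half_of_mul_sq_eq_one hlam ht hlt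
  have hTval : trace (Q ^ 2) = ((lam ^ (-(1 : ℝ) / 2) : ℝ) : ℂ) := by rw [← htT, htval]
  refine ⟨hTval, hTrQ ▸ hTval,
    exists_mem_unitaryGroup_eq_smul_mul_inv hQ.1.eq hdet
      (s := lam ^ ((1 : ℝ) / 4)) (Real.rpow_pos_of_pos hlam _).ne' ?_⟩
  rw [hM, htval, ← Real.rpow_natCast, ← Real.rpow_mul hlam.le, ← Real.rpow_one_add' hlam.le]
  all_goals norm_num
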